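/- arXiv:2309.10585 — 5 statements merged into one kernel-verified Lean document; each statement's English description precedes it below -/
import Mathlib

section
/- Assume Hom(X⟦1⟧, Y) = 0 and Hom(X⟦1⟧, M) = 0. Let α ∈ End(X) and α¹ ∈ End(M ⊞ M₁) satisfy α ≫ d̄ = d̄ ≫ α¹ (i.e. (α, α¹) is a chain endomorphism of the two-term complex X ⟶d̄ M ⊞ M₁). Then the following are equivalent: (i) there exists s : M ⊞ M₁ ⟶ X with α = d̄ ≫ s and α¹ = s ≫ d̄ (i.e. (α, α¹) is null-homotopic); (ii) α¹ ≫ ḡ = 0. -/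
open CategoryTheory CategoryTheory.Limits CategoryTheory.Pretriangulated

universe v u

/-!
For (ii) ⇒ (i): the components of `α¹ ≫ ḡ = 0` say that `α¹` has zero `M`-component and that its
`M₁`-component `a` satisfies `a ≫ g = 0`, so `a = s ≫ f` for some `s` by exactness of the
triangle; this already gives `α¹ = s ≫ d̄`. Then `(α - d̄ ≫ s) ≫ d̄ = 0` by the chain condition,
so `(α - d̄ ≫ s) ≫ f = 0`. Shifting, `(α - d̄ ≫ s)⟦1⟧` factors through `h` via some map
`X⟦1⟧ ⟶ Y`, which vanishes since `Hom(X⟦1⟧, Y) = 0`; hence `α = d̄ ≫ s`.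
-/

namespace CategoryTheory.Limits

variable {C : Type u} [Category.{v} C] [HasZeroMorphisms C] [HasBinaryBiproducts C]

lemma biprod.comp_map_id_eq_zero_iff {W M M₁ Y : C} (g : M₁ ⟶ Y) (φ : W ⟶ M ⊞ M₁) :
    φ ≫ biprod.map (𝟙 M) g = 0 ↔ φ ≫ biprod.fst = 0 ∧ (φ ≫ biprod.snd) ≫ g = 0 := by
  constructor
  · intro hφ
    exact ⟨by simpa using hφ =≫ biprod.fst, by simpa using hφ =≫ biprod.snd⟩
  · rintro ⟨hfst, hsnd⟩
    ext
    · simp [hfst]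
    · simpa using hsnd

lemma biprod.lift_zero_comp_map_id_eq_zero {X M M₁ Y : C} {f : X ⟶ M₁} {g : M₁ ⟶ Y}
    (hfg : f ≫ g = 0) : biprod.lift (0 : X ⟶ M) f ≫ biprod.map (𝟙 M) g = 0 := by
  ext <;> simp [hfg]

lemma biprod.eq_comp_lift_zero {W X M M₁ : C} (f : X ⟶ M₁) (φ : W ⟶ M ⊞ M₁) (t : W ⟶ X)
    (hfst : φ ≫ biprod.fst = 0) (hsnd : φ ≫ biprod.snd = t ≫ f) :
    φ = t ≫ biprod.lift (0 : X ⟶ M) f := by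
  ext <;> simp [hfst, hsnd]

end CategoryTheory.Limits

namespace CategoryTheory

variable {C : Type u} [Category.{v} C] [Preadditive C] [HasZeroObject C] [HasShift C ℤ]
  [∀ n : ℤ, (CategoryTheory.shiftFunctor C n).Additive] [Pretriangulated C]

lemma Pretriangulated.Triangle.eq_zero_of_comp_mor₁_eq_zero {T : Triangle C}
    (hT : T ∈ distTriang C) {W : C} (hW : ∀ b : W⟦(1 : ℤ)⟧ ⟶ T.obj₃, b = 0)
    (φ : W ⟶ T.obj₁) (hφ : φ ≫ T.mor₁ = 0) : φ = 0 := by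
  obtain ⟨b, hb⟩ := coyoneda_exact₁ T hT (φ⟦(1 : ℤ)⟧')
    (by rw [← Functor.map_comp, hφ, Functor.map_zero])
  apply (CategoryTheory.shiftFunctor C (1 : ℤ)).map_injective
  rw [hb, hW b, zero_comp, Functor.map_zero]

end CategoryTheory

/-- Let `T` be a pretriangulated category with binary biproducts,
`M` an object of `T` and `X ⟶f M₁ ⟶g Y ⟶h X⟦1⟧` a distinguished triangle.
Write `d̄ = biprod.lift 0 f : X ⟶ M ⊞ M₁` and `ḡ = biprod.map (𝟙 M) g : M ⊞ M₁ ⟶ M ⊞ Y`.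
Assume `Hom(X⟦1⟧, Y) = 0` and `Hom(X⟦1⟧, M) = 0`. If `(α, α¹)` is a chain
endomorphism of the two-term complex `X ⟶d̄ M ⊞ M₁` (i.e. `α ≫ d̄ = d̄ ≫ α¹`),
then `(α, α¹)` is null-homotopic iff `α¹ ≫ ḡ = 0`. -/
theorem statement4 {T : Type u} [Category.{v} T] [Preadditive T] [HasZeroObject T]
    [HasShift T ℤ] [∀ n : ℤ, (shiftFunctor T n).Additive] [Pretriangulated T]
    [HasBinaryBiproducts T]
    (M X M₁ Y : T) (f : X ⟶ M₁) (g : M₁ ⟶ Y) (h : Y ⟶ X⟦(1 : ℤ)⟧)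
    (hT : Triangle.mk f g h ∈ distTriang T)
    (hXY : ∀ φ : (X⟦(1 : ℤ)⟧ : T) ⟶ Y, φ = 0)
    (hXM : ∀ φ : (X⟦(1 : ℤ)⟧ : T) ⟶ M, φ = 0)
    (α : X ⟶ X) (α₁ : M ⊞ M₁ ⟶ M ⊞ M₁)
    (hcomm : α ≫ biprod.lift (0 : X ⟶ M) f = biprod.lift (0 : X ⟶ M) f ≫ α₁) :
    (∃ s : M ⊞ M₁ ⟶ X, α = biprod.lift (0 : X ⟶ M) f ≫ s ∧
        α₁ = s ≫ biprod.lift (0 : X ⟶ M) f) ↔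
      α₁ ≫ biprod.map (𝟙 M) g = 0 := by
  have hfg : f ≫ g = 0 := comp_distTriang_mor_zero₁₂ _ hT
  constructor
  · rintro ⟨s, -, rfl⟩
    rw [Category.assoc, biprod.lift_zero_comp_map_id_eq_zero hfg, comp_zero]
  · intro h0
    obtain ⟨hfst, hsnd⟩ := (biprod.comp_map_id_eq_zero_iff g α₁).1 h0
    obtain ⟨s, hs⟩ : ∃ s : M ⊞ M₁ ⟶ X, α₁ ≫ biprod.snd = s ≫ f :=
      Triangle.coyoneda_exact₂ _ hT (α₁ ≫ biprod.snd) hsnd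
    have hα₁ : α₁ = s ≫ biprod.lift (0 : X ⟶ M) f := biprod.eq_comp_lift_zero f α₁ s hfst hs
    refine ⟨s, ?_, hα₁⟩
    have hd : (α - biprod.lift (0 : X ⟶ M) f ≫ s) ≫ biprod.lift (0 : X ⟶ M) f = 0 := by
      rw [Preadditive.sub_comp, hcomm, hα₁, Category.assoc, sub_self]
    have hdf : (α - biprod.lift (0 : X ⟶ M) f ≫ s) ≫ f = 0 := by
      simpa only [Category.assoc, biprod.lift_snd, zero_comp] using hd =≫ biprod.snd
    exact sub_eq_zero.1 (Triangle.eq_zero_of_comp_mor₁_eq_zero hT hXY _ hdf)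
end

section
/- Assume Hom(X⟦1⟧, Y) = 0 and Hom(X⟦1⟧, M) = 0. Let α¹ ∈ End(M ⊞ M₁) be such that there exists α ∈ End(X) with α ≫ d̄ = d̄ ≫ α¹. Then there exists a unique β ∈ End(M ⊞ Y) with α¹ ≫ ḡ = ḡ ≫ β; moreover this β lies in the subring B of End(M ⊞ Y). -/
open CategoryTheory CategoryTheory.Limits CategoryTheory.Pretriangulated

universe v u

/-!
Writing `d̄ = f ≫ inr` and `ḡ = biprod.map (𝟙 M) g`, the map `ḡ` behaves like a cokernel of `d̄`
against every target `W` with `Hom(X⟦1⟧, W) = 0`: a map out of `M ⊞ M₁` killed by `d̄` factors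
through `ḡ` (exactness of `Hom(-, W)` at `M₁`), and uniquely so (exactness at `Y`). Since
`d̄ ≫ α₁ ≫ ḡ = α ≫ d̄ ≫ ḡ = 0`, this gives `β`. The conditions defining `B` only involve the
components of `α₁ ≫ ḡ = ḡ ≫ β` along `inl` and `inr`.
-/

namespace CategoryTheory.Pretriangulated

variable {C : Type u} [Category.{v} C] [Preadditive C] [HasZeroObject C] [HasShift C ℤ]
  [∀ n : ℤ, (CategoryTheory.shiftFunctor C n).Additive] [Pretriangulated C]

namespace Triangle

lemma cancel_mor₂ (T : Triangle C) (hT : T ∈ distTriang C) {Z : C}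
    (hZ : ∀ φ : T.obj₁⟦(1 : ℤ)⟧ ⟶ Z, φ = 0) {v v' : T.obj₃ ⟶ Z}
    (h : T.mor₂ ≫ v = T.mor₂ ≫ v') : v = v' := by
  obtain ⟨φ, hφ⟩ := T.yoneda_exact₃ hT (v - v') (by rw [Preadditive.comp_sub, h, sub_self])
  rw [hZ φ, comp_zero] at hφ
  exact sub_eq_zero.mp hφ

end Triangle

variable [HasBinaryBiproducts C] {X M₁ Y : C} {f : X ⟶ M₁} {g : M₁ ⟶ Y} {h : Y ⟶ X⟦(1 : ℤ)⟧}

lemma biprod_map_id_cancel (hT : Triangle.mk f g h ∈ distTriang C) (M : C) {W : C}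
    (hW : ∀ φ : X⟦(1 : ℤ)⟧ ⟶ W, φ = 0) {β β' : M ⊞ Y ⟶ W}
    (hβ : biprod.map (𝟙 M) g ≫ β = biprod.map (𝟙 M) g ≫ β') : β = β' := by
  apply biprod.hom_ext'
  · simpa using biprod.inl ≫= hβ
  · have hg : g ≫ biprod.inr ≫ β = g ≫ biprod.inr ≫ β' := by simpa using biprod.inr ≫= hβ
    exact Triangle.cancel_mor₂ _ hT hW hg

lemma exists_eq_biprod_map_id_comp (hT : Triangle.mk f g h ∈ distTriang C) {M W : C}
    (φ : M ⊞ M₁ ⟶ W) (hφ : (f ≫ biprod.inr) ≫ φ = 0) :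
    ∃ β : M ⊞ Y ⟶ W, φ = biprod.map (𝟙 M) g ≫ β := by
  have hf : f ≫ biprod.inr ≫ φ = 0 := by simpa using hφ
  obtain ⟨ψ, hψ⟩ : ∃ ψ : Y ⟶ W, biprod.inr ≫ φ = g ≫ ψ := Triangle.yoneda_exact₂ _ hT _ hf
  refine ⟨biprod.desc (biprod.inl ≫ φ) ψ, biprod.hom_ext' _ _ ?_ ?_⟩
  · simp
  · simpa using hψ

end CategoryTheory.Pretriangulated

lemma CategoryTheory.Limits.biprod.components_of_comp_map_id_eq {C : Type u} [Category.{v} C]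
    [Preadditive C] [HasBinaryBiproducts C] {M M₁ Y : C} {g : M₁ ⟶ Y}
    {α₁ : M ⊞ M₁ ⟶ M ⊞ M₁} {β : M ⊞ Y ⟶ M ⊞ Y}
    (hβ : α₁ ≫ biprod.map (𝟙 M) g = biprod.map (𝟙 M) g ≫ β) :
    g ≫ (biprod.inr ≫ β ≫ biprod.snd) = (biprod.inr ≫ α₁ ≫ biprod.snd) ≫ g ∧
      biprod.inl ≫ β ≫ biprod.snd = (biprod.inl ≫ α₁ ≫ biprod.snd) ≫ g := by
  constructor
  · simpa using (biprod.inr ≫= hβ =≫ biprod.snd).symm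
  · simpa using (biprod.inl ≫= hβ =≫ biprod.snd).symm

/-- Let `T` be a pretriangulated category with binary biproducts,
`M` an object of `T` and `X ⟶f M₁ ⟶g Y ⟶h X⟦1⟧` a distinguished triangle.
Write `d̄ = biprod.lift 0 f : X ⟶ M ⊞ M₁` and `ḡ = biprod.map (𝟙 M) g : M ⊞ M₁ ⟶ M ⊞ Y`.
Assume `Hom(X⟦1⟧, Y) = 0` and `Hom(X⟦1⟧, M) = 0`. If `α¹ ∈ End(M ⊞ M₁)` admits
`α ∈ End(X)` with `α ≫ d̄ = d̄ ≫ α¹`, then there is a unique `β ∈ End(M ⊞ Y)` with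
`α¹ ≫ ḡ = ḡ ≫ β`, and this `β` lies in the subring `B`. -/
theorem statement5 {T : Type u} [Category.{v} T] [Preadditive T] [HasZeroObject T]
    [HasShift T ℤ] [∀ n : ℤ, (shiftFunctor T n).Additive] [Pretriangulated T]
    [HasBinaryBiproducts T]
    (M X M₁ Y : T) (f : X ⟶ M₁) (g : M₁ ⟶ Y) (h : Y ⟶ X⟦(1 : ℤ)⟧)
    (hT : Triangle.mk f g h ∈ distTriang T)
    (hXY : ∀ φ : (X⟦(1 : ℤ)⟧ : T) ⟶ Y, φ = 0)
    (hXM : ∀ φ : (X⟦(1 : ℤ)⟧ : T) ⟶ M, φ = 0)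
    (B : Set (M ⊞ Y ⟶ M ⊞ Y))
    (hB : B = {ψ | (∃ t' : M₁ ⟶ M₁, g ≫ (biprod.inr ≫ ψ ≫ biprod.snd) = t' ≫ g) ∧
        (∃ s : M ⟶ M₁, biprod.inl ≫ ψ ≫ biprod.snd = s ≫ g)})
    (α₁ : M ⊞ M₁ ⟶ M ⊞ M₁)
    (hα : ∃ α : X ⟶ X, α ≫ biprod.lift (0 : X ⟶ M) f = biprod.lift (0 : X ⟶ M) f ≫ α₁) :
    (∃! β : M ⊞ Y ⟶ M ⊞ Y, α₁ ≫ biprod.map (𝟙 M) g = biprod.map (𝟙 M) g ≫ β) ∧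
      (∀ β : M ⊞ Y ⟶ M ⊞ Y, α₁ ≫ biprod.map (𝟙 M) g = biprod.map (𝟙 M) g ≫ β →
        β ∈ B) := by
  obtain ⟨α, hα⟩ := hα
  have hd : biprod.lift (0 : X ⟶ M) f = f ≫ biprod.inr := by ext <;> simp
  have hfg : f ≫ g = 0 := comp_distTriang_mor_zero₁₂ _ hT
  have hXMY : ∀ φ : X⟦(1 : ℤ)⟧ ⟶ M ⊞ Y, φ = 0 := fun φ =>
    biprod.hom_ext _ _ (by simpa using hXM _) (by simpa using hXY _)
  have hkill : (f ≫ biprod.inr) ≫ α₁ ≫ biprod.map (𝟙 M) g = 0 := by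
    rw [← Category.assoc, ← hd, ← hα, hd]
    simp [reassoc_of% hfg]
  obtain ⟨β, hβ⟩ := exists_eq_biprod_map_id_comp hT _ hkill
  refine ⟨⟨β, hβ, fun β' hβ' => biprod_map_id_cancel hT M hXMY (hβ'.symm.trans hβ)⟩,
    fun β' hβ' => ?_⟩
  obtain ⟨hY, hM⟩ := biprod.components_of_comp_map_id_eq hβ'
  exact hB ▸ ⟨⟨_, hY⟩, ⟨_, hM⟩⟩
end

section
/- For every β ∈ B there exist α ∈ End(X) and α¹ ∈ End(M ⊞ M₁) such that α ≫ d̄ = d̄ ≫ α¹ and α¹ ≫ ḡ = ḡ ≫ β; that is, every element of B is induced by a chain endomorphism of the two-term complex X ⟶d̄ M ⊞ M₁ via completion to an endomorphism of the distinguished triangle X ⟶d̄ M ⊞ M₁ ⟶ḡ M ⊞ Y ⟶ X⟦1⟧. -/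
open CategoryTheory CategoryTheory.Limits CategoryTheory.Pretriangulated

universe v u

/-!
Write `β` as a matrix with `(M → Y)`-entry `s ≫ g` and `(Y → Y)`-entry `t`, where
`g ≫ t = t' ≫ g`. Completing the square `(t', t)` between two copies of the distinguished
triangle gives `α` with `f ≫ t' = α ≫ f`. The endomorphism `α₁` of `M ⊞ M₁` with
`M → M`, `M₁ → M`, `M → M₁`, `M₁ → M₁` entries `β_MM`, `g ≫ β_YM`, `s`, `t'` then lifts `β`
along `ḡ`, and it commutes with `d̄ = (0, f)` because `f ≫ g = 0`.
-/

namespace CategoryTheory.Limits.biprod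

variable {C : Type u} [Category.{v} C] [Preadditive C] [HasBinaryBiproducts C]

noncomputable def ofComponents {M₁ A₁ M₂ A₂ : C}
    (a : M₁ ⟶ M₂) (b : A₁ ⟶ M₂) (c : M₁ ⟶ A₂) (d : A₁ ⟶ A₂) :
    M₁ ⊞ A₁ ⟶ M₂ ⊞ A₂ :=
  lift (desc a b) (desc c d)

theorem lift_zero_comp_ofComponents_of_comp_eq_zero {X M A : C} {f : X ⟶ A} {α : X ⟶ X}
    (a : M ⟶ M) (b : A ⟶ M) (c : M ⟶ A) {d : A ⟶ A} (hb : f ≫ b = 0) (hd : f ≫ d = α ≫ f) :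
    lift 0 f ≫ ofComponents a b c d = α ≫ lift 0 f := by
  ext <;> simp [ofComponents, hb, hd]

theorem ofComponents_comp_map_id_eq {M A B : C} (g : A ⟶ B) (β : M ⊞ B ⟶ M ⊞ B)
    {s : M ⟶ A} {t' : A ⟶ A} (hs : inl ≫ β ≫ snd = s ≫ g)
    (ht : g ≫ inr ≫ β ≫ snd = t' ≫ g) :
    ofComponents (inl ≫ β ≫ fst) (g ≫ inr ≫ β ≫ fst) s t' ≫ map (𝟙 M) g =
      map (𝟙 M) g ≫ β := by
  ext <;> simp [ofComponents, hs, ← ht]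

end CategoryTheory.Limits.biprod

/-- Let `T` be a pretriangulated category with binary biproducts,
`M` an object of `T` and `X ⟶f M₁ ⟶g Y ⟶h X⟦1⟧` a distinguished triangle.
Write `d̄ = biprod.lift 0 f : X ⟶ M ⊞ M₁` and `ḡ = biprod.map (𝟙 M) g : M ⊞ M₁ ⟶ M ⊞ Y`.
Every `β ∈ B` is induced by a chain endomorphism of `X ⟶d̄ M ⊞ M₁`: there are
`α ∈ End(X)` and `α¹ ∈ End(M ⊞ M₁)` with `α ≫ d̄ = d̄ ≫ α¹` and `α¹ ≫ ḡ = ḡ ≫ β`. -/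
theorem statement6 {T : Type u} [Category.{v} T] [Preadditive T] [HasZeroObject T]
    [HasShift T ℤ] [∀ n : ℤ, (shiftFunctor T n).Additive] [Pretriangulated T]
    [HasBinaryBiproducts T]
    (M X M₁ Y : T) (f : X ⟶ M₁) (g : M₁ ⟶ Y) (h : Y ⟶ X⟦(1 : ℤ)⟧)
    (hT : Triangle.mk f g h ∈ distTriang T)
    (B : Set (M ⊞ Y ⟶ M ⊞ Y))
    (hB : B = {ψ | (∃ t' : M₁ ⟶ M₁, g ≫ (biprod.inr ≫ ψ ≫ biprod.snd) = t' ≫ g) ∧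
        (∃ s : M ⟶ M₁, biprod.inl ≫ ψ ≫ biprod.snd = s ≫ g)}) :
    ∀ β ∈ B, ∃ (α : X ⟶ X) (α₁ : M ⊞ M₁ ⟶ M ⊞ M₁),
      α ≫ biprod.lift (0 : X ⟶ M) f = biprod.lift (0 : X ⟶ M) f ≫ α₁ ∧
      α₁ ≫ biprod.map (𝟙 M) g = biprod.map (𝟙 M) g ≫ β := by
  intro β hβ
  rw [hB] at hβ
  obtain ⟨⟨t', ht'⟩, s, hs⟩ := hβ
  obtain ⟨α, hα, -⟩ : ∃ α : X ⟶ X, f ≫ t' = α ≫ f ∧ _ :=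
    complete_distinguished_triangle_morphism₁ _ _ hT hT t' (biprod.inr ≫ β ≫ biprod.snd) ht'
  have hfg : f ≫ g = 0 := comp_distTriang_mor_zero₁₂ _ hT
  refine ⟨α, _, ?_, biprod.ofComponents_comp_map_id_eq g β hs ht'⟩
  exact (biprod.lift_zero_comp_ofComponents_of_comp_eq_zero _ _ _
    (by rw [reassoc_of% hfg, zero_comp]) hα).symm
end

section
/- Assume Hom(X⟦1⟧, Y) = 0 and Hom(X⟦1⟧, M) = 0. Then there is a ring isomorphism End_{K(T)}(P•) ≅ B between the endomorphism ring of the complex P• in the homotopy category K(T) and the subring B of End(M ⊞ Y). The isomorphism sends the homotopy class of a chain endomorphism (α, α¹) of P• to the unique β ∈ End(M ⊞ Y) satisfying α¹ ≫ ḡ = ḡ ≫ β. -/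
open CategoryTheory CategoryTheory.Limits CategoryTheory.Pretriangulated ZeroObject

universe v u

/-- The object part of the cochain complex concentrated in degrees `0` and `1`,
with `A` in degree `0` and `B` in degree `1`. -/
noncomputable def twoObj {C : Type u} [Category.{v} C] [HasZeroObject C]
    (A B : C) (i : ℤ) : C :=
  if i = 0 then A else if i = 1 then B else 0

/-- The cochain complex over `C` concentrated in degrees `0` and `1`, with
`A` in degree `0`, `B` in degree `1` and differential `d : A ⟶ B`. -/
noncomputable def twoTermComplex {C : Type u} [Category.{v} C] [Preadditive C]
    [HasZeroObject C] {A B : C} (d : A ⟶ B) : CochainComplex C ℤ where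
  X := twoObj A B
  d i j :=
    if hij : i = 0 ∧ j = 1 then
      eqToHom (show twoObj A B i = A by simp [twoObj, hij.1]) ≫ d ≫
        eqToHom (show B = twoObj A B j by simp [twoObj, hij.2])
    else 0
  shape i j hij := by
    beta_reduce
    rw [dif_neg]
    rintro ⟨rfl, rfl⟩
    exact hij rfl
  d_comp_d' i j k hij hjk := by
    beta_reduce
    by_cases h' : i = 0 ∧ j = 1
    · rw [dif_neg (fun hk : j = 0 ∧ k = 1 => by simp [h'.2] at hk), comp_zero]
    · rw [dif_neg h', zero_comp]

/-!
Write `d̄ = (0, f) : X ⟶ M ⊞ M₁` and `ḡ = 𝟙 M ⊞ g`. A chain endomorphism of `P•` is a pair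
`(α⁰, α¹)` with `α⁰ ≫ d̄ = d̄ ≫ α¹`, and a homotopy is a single map `s : M ⊞ M₁ ⟶ X`.
Adding the trivial triangle `0 ⟶ M ⟶ M ⟶ 0` to the given one shows that `ḡ` is a weak cokernel
of `d̄` and `d̄` a weak kernel of `ḡ`; since `Hom(X⟦1⟧, M ⊞ Y) = 0`, moreover `ḡ ≫ β = 0` forces
`β = 0` and `e ≫ d̄ = 0` forces `e = 0` for `e : X ⟶ X`. So `α¹ ≫ ḡ` factors uniquely as
`ḡ ≫ β`, and `α ↦ β` is additive and multiplicative. It kills exactly the null-homotopic maps: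
if `α¹ ≫ ḡ = 0` then `α¹ = s ≫ d̄`, and `(α⁰ - d̄ ≫ s) ≫ d̄ = 0` gives `α⁰ = d̄ ≫ s`.
Its image consists of the `β` admitting some `α¹` with `α¹ ≫ ḡ = ḡ ≫ β` (an `α⁰` then exists
by the weak kernel property), and reading this condition off in components gives `B`.
-/

namespace twoTermComplex

variable {C : Type u} [Category.{v} C] [Preadditive C] [HasZeroObject C]
  {A B A' B' : C} {d : A ⟶ B} {d' : A' ⟶ B'}

lemma d_zero_one (d : A ⟶ B) : (twoTermComplex d).d 0 1 = d := by
  change eqToHom rfl ≫ d ≫ eqToHom rfl = d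
  simp

lemma d_eq_zero (d : A ⟶ B) {i j : ℤ} (h : ¬ (i = 0 ∧ j = 1)) :
    (twoTermComplex d).d i j = 0 :=
  dif_neg h

lemma isZero_X (d : A ⟶ B) {i : ℤ} (h0 : i ≠ 0) (h1 : i ≠ 1) :
    IsZero ((twoTermComplex d).X i) := by
  simp only [twoTermComplex, twoObj, if_neg h0, if_neg h1]
  exact isZero_zero C

/-- `(twoTermComplex d).X 0` is `A` only up to unfolding `twoObj`, which `simp` and `rw` do not
see through, so the components of a chain map are repackaged with their intended types. -/
def f₀ (φ : twoTermComplex d ⟶ twoTermComplex d') : A ⟶ A' := φ.f 0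

def f₁ (φ : twoTermComplex d ⟶ twoTermComplex d') : B ⟶ B' := φ.f 1

lemma f₀_comp (φ : twoTermComplex d ⟶ twoTermComplex d') : f₀ φ ≫ d' = d ≫ f₁ φ := by
  have h := φ.comm 0 1
  rw [d_zero_one, d_zero_one] at h
  exact h

lemma eqToHom_comp_f_one_comp_eqToHom (φ : twoTermComplex d ⟶ twoTermComplex d')
    (h : (twoTermComplex d).X 1 = B) (h' : (twoTermComplex d').X 1 = B') :
    eqToHom h.symm ≫ φ.f 1 ≫ eqToHom h' = f₁ φ := by
  change eqToHom rfl ≫ f₁ φ ≫ eqToHom rfl = f₁ φ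
  simp

lemma f₁_id : f₁ (𝟙 (twoTermComplex d)) = 𝟙 B := rfl

lemma f₁_add (φ ψ : twoTermComplex d ⟶ twoTermComplex d') : f₁ (φ + ψ) = f₁ φ + f₁ ψ := rfl

lemma f₁_comp {A'' B'' : C} {d'' : A'' ⟶ B''} (φ : twoTermComplex d ⟶ twoTermComplex d')
    (ψ : twoTermComplex d' ⟶ twoTermComplex d'') : f₁ (φ ≫ ψ) = f₁ φ ≫ f₁ ψ := rfl

noncomputable def homMk (u : A ⟶ A') (v : B ⟶ B') (h : u ≫ d' = d ≫ v) :
    twoTermComplex d ⟶ twoTermComplex d' where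
  f i := match i with
    | 0 => u
    | 1 => v
    | _ => 0
  comm' := by
    rintro i _ rfl
    by_cases hi : i = 0
    · subst hi
      change u ≫ (twoTermComplex d').d 0 1 = (twoTermComplex d).d 0 1 ≫ v
      rw [d_zero_one, d_zero_one]
      exact h
    by_cases hi' : i = -1
    · exact (isZero_X d (by omega) (by omega)).eq_of_src _ _
    · exact (isZero_X d' (by omega) (by omega)).eq_of_tgt _ _

lemma f₁_homMk (u : A ⟶ A') (v : B ⟶ B') (h : u ≫ d' = d ≫ v) : f₁ (homMk u v h) = v := rfl

variable (d d') in
noncomputable def homotopyHom (s : B ⟶ A') (i j : ℤ) :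
    (twoTermComplex d).X i ⟶ (twoTermComplex d').X j :=
  if h : i = 1 ∧ j = 0 then eqToHom (by rw [h.1]; rfl) ≫ s ≫ eqToHom (by rw [h.2]; rfl)
  else 0

lemma homotopyHom_one_zero (s : B ⟶ A') : homotopyHom d d' s 1 0 = s := by
  change eqToHom rfl ≫ s ≫ eqToHom rfl = s
  simp

noncomputable def homotopyMk (φ ψ : twoTermComplex d ⟶ twoTermComplex d') (s : B ⟶ A')
    (h₀ : f₀ φ = d ≫ s + f₀ ψ) (h₁ : f₁ φ = s ≫ d' + f₁ ψ) : Homotopy φ ψ where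
  hom := homotopyHom d d' s
  zero i j hij := dif_neg (by rintro ⟨rfl, rfl⟩; exact hij rfl)
  comm i := by
    by_cases hi0 : i = 0
    · subst hi0
      rw [dNext_eq _ (show (ComplexShape.up ℤ).Rel 0 1 by simp),
        prevD_eq _ (show (ComplexShape.up ℤ).Rel (-1) 0 by simp), d_zero_one,
        homotopyHom_one_zero, homotopyHom, dif_neg (by omega), zero_comp, add_zero]
      exact h₀
    by_cases hi1 : i = 1
    · subst hi1
      rw [dNext_eq _ (show (ComplexShape.up ℤ).Rel 1 2 by simp),
        prevD_eq _ (show (ComplexShape.up ℤ).Rel 0 1 by simp), d_zero_one,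
        homotopyHom_one_zero, homotopyHom, dif_neg (by omega), comp_zero, zero_add]
      exact h₁
    · exact (isZero_X d hi0 hi1).eq_of_src _ _

lemma exists_of_homotopy {φ ψ : twoTermComplex d ⟶ twoTermComplex d'} (H : Homotopy φ ψ) :
    ∃ s : B ⟶ A', f₀ φ = d ≫ s + f₀ ψ ∧ f₁ φ = s ≫ d' + f₁ ψ := by
  refine ⟨H.hom 1 0, ?_, ?_⟩
  · have h := H.comm 0
    rw [dNext_eq _ (show (ComplexShape.up ℤ).Rel 0 1 by simp),
      prevD_eq _ (show (ComplexShape.up ℤ).Rel (-1) 0 by simp), d_zero_one,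
      d_eq_zero d' (i := -1) (j := 0) (by omega), comp_zero, add_zero] at h
    exact h
  · have h := H.comm 1
    rw [dNext_eq _ (show (ComplexShape.up ℤ).Rel 1 2 by simp),
      prevD_eq _ (show (ComplexShape.up ℤ).Rel 0 1 by simp), d_zero_one,
      d_eq_zero d (i := 1) (j := 2) (by omega), zero_comp, zero_add] at h
    exact h

open HomotopyCategory in
lemma quotient_map_eq_iff (φ ψ : twoTermComplex d ⟶ twoTermComplex d') :
    (quotient C (.up ℤ)).map φ = (quotient C (.up ℤ)).map ψ ↔
      ∃ s : B ⟶ A', f₀ φ = d ≫ s + f₀ ψ ∧ f₁ φ = s ≫ d' + f₁ ψ :=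
  ⟨fun h => exists_of_homotopy (homotopyOfEq _ _ h),
    fun ⟨s, h₀, h₁⟩ => eq_of_homotopy _ _ (homotopyMk φ ψ s h₀ h₁)⟩

end twoTermComplex

section Biproduct

variable {C : Type u} [Category.{v} C] [Preadditive C] [HasBinaryBiproducts C]

lemma biprod_lift_zero_eq {M X M₁ : C} (f : X ⟶ M₁) :
    biprod.lift (0 : X ⟶ M) f = f ≫ biprod.inr := by
  ext <;> simp

lemma exists_comp_biprod_map_eq_iff {M M₁ Y : C} (g : M₁ ⟶ Y) (β : M ⊞ Y ⟶ M ⊞ Y) :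
    (∃ α : M ⊞ M₁ ⟶ M ⊞ M₁, α ≫ biprod.map (𝟙 M) g = biprod.map (𝟙 M) g ≫ β) ↔
      (∃ t' : M₁ ⟶ M₁, g ≫ (biprod.inr ≫ β ≫ biprod.snd) = t' ≫ g) ∧
        (∃ s : M ⟶ M₁, biprod.inl ≫ β ≫ biprod.snd = s ≫ g) := by
  constructor
  · rintro ⟨α, hα⟩
    refine ⟨⟨biprod.inr ≫ α ≫ biprod.snd, ?_⟩, ⟨biprod.inl ≫ α ≫ biprod.snd, ?_⟩⟩
    · simpa using (biprod.inr ≫= hα =≫ biprod.snd).symm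
    · simpa using (biprod.inl ≫= hα =≫ biprod.snd).symm
  · rintro ⟨⟨t', ht'⟩, ⟨s, hs⟩⟩
    refine ⟨biprod.desc (biprod.lift (biprod.inl ≫ β ≫ biprod.fst) s)
      (biprod.lift (g ≫ biprod.inr ≫ β ≫ biprod.fst) t'), ?_⟩
    ext <;> simp [hs, ht']

end Biproduct

section Triangle

variable {T : Type u} [Category.{v} T] [Preadditive T] [HasZeroObject T] [HasShift T ℤ]
  [∀ n : ℤ, (shiftFunctor T n).Additive] [Pretriangulated T]
  {X M₁ Y : T} {f : X ⟶ M₁} {g : M₁ ⟶ Y} {h : Y ⟶ X⟦(1 : ℤ)⟧}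

lemma eq_of_comp_mor₂_eq (hT : Triangle.mk f g h ∈ distTriang T) {Z : T}
    (hZ : ∀ φ : X⟦(1 : ℤ)⟧ ⟶ Z, φ = 0) {β β' : Y ⟶ Z} (hβ : g ≫ β = g ≫ β') : β = β' := by
  obtain ⟨w, hw⟩ : ∃ w : X⟦(1 : ℤ)⟧ ⟶ Z, β - β' = h ≫ w :=
    Triangle.yoneda_exact₃ _ hT (β - β')
      (show g ≫ (β - β') = 0 by rw [Preadditive.comp_sub, hβ, sub_self])
  rw [← sub_eq_zero, hw, hZ w, comp_zero]

lemma eq_zero_of_comp_mor₁_eq_zero (hT : Triangle.mk f g h ∈ distTriang T) {W : T}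
    (hW : ∀ φ : W⟦(1 : ℤ)⟧ ⟶ Y, φ = 0) {e : W ⟶ X} (he : e ≫ f = 0) : e = 0 := by
  obtain ⟨k, hk⟩ : ∃ k : W⟦(1 : ℤ)⟧ ⟶ Y, e⟦(1 : ℤ)⟧' = k ≫ h :=
    Triangle.coyoneda_exact₁ _ hT (e⟦(1 : ℤ)⟧')
      (show e⟦(1 : ℤ)⟧' ≫ f⟦(1 : ℤ)⟧' = 0 by rw [← Functor.map_comp, he, Functor.map_zero])
  rwa [hW k, zero_comp, Functor.map_eq_zero_iff] at hk

variable [HasBinaryBiproducts T] {M : T}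

lemma biprod_lift_zero_comp_map (hT : Triangle.mk f g h ∈ distTriang T) :
    biprod.lift (0 : X ⟶ M) f ≫ biprod.map (𝟙 M) g = 0 := by
  have hfg : f ≫ g = 0 := comp_distTriang_mor_zero₁₂ _ hT
  simp [biprod_lift_zero_eq, reassoc_of% hfg]

lemma eq_of_biprod_map_comp_eq (hT : Triangle.mk f g h ∈ distTriang T) {Z : T}
    (hZ : ∀ φ : X⟦(1 : ℤ)⟧ ⟶ Z, φ = 0) {β β' : M ⊞ Y ⟶ Z}
    (hβ : biprod.map (𝟙 M) g ≫ β = biprod.map (𝟙 M) g ≫ β') : β = β' := by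
  ext
  · simpa using biprod.inl ≫= hβ
  · exact eq_of_comp_mor₂_eq hT hZ (by simpa using biprod.inr ≫= hβ)

lemma exists_eq_biprod_map_comp (hT : Triangle.mk f g h ∈ distTriang T) {Z : T}
    (u : M ⊞ M₁ ⟶ Z) (hu : biprod.lift (0 : X ⟶ M) f ≫ u = 0) :
    ∃ w : M ⊞ Y ⟶ Z, u = biprod.map (𝟙 M) g ≫ w := by
  obtain ⟨c, hc⟩ : ∃ c : Y ⟶ Z, biprod.inr ≫ u = g ≫ c :=
    Triangle.yoneda_exact₂ _ hT (biprod.inr ≫ u)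
      (show f ≫ biprod.inr ≫ u = 0 by simpa [biprod_lift_zero_eq] using hu)
  exact ⟨biprod.desc (biprod.inl ≫ u) c, by ext <;> simp [hc]⟩

lemma exists_eq_comp_biprod_lift (hT : Triangle.mk f g h ∈ distTriang T) {W : T}
    (u : W ⟶ M ⊞ M₁) (hu : u ≫ biprod.map (𝟙 M) g = 0) :
    ∃ s : W ⟶ X, u = s ≫ biprod.lift (0 : X ⟶ M) f := by
  obtain ⟨s, hs⟩ : ∃ s : W ⟶ X, u ≫ biprod.snd = s ≫ f :=
    Triangle.coyoneda_exact₂ _ hT (u ≫ biprod.snd)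
      (show (u ≫ biprod.snd) ≫ g = 0 by simpa using hu =≫ biprod.snd)
  refine ⟨s, ?_⟩
  ext
  · simpa using hu =≫ biprod.fst
  · simpa using hs

open HomotopyCategory twoTermComplex

local notation "P" => twoTermComplex (biprod.lift (0 : X ⟶ M) f)

lemma exists_f₁_comp_biprod_map_eq (hT : Triangle.mk f g h ∈ distTriang T) (φ : P ⟶ P) :
    ∃ β : M ⊞ Y ⟶ M ⊞ Y, f₁ φ ≫ biprod.map (𝟙 M) g = biprod.map (𝟙 M) g ≫ β :=
  exists_eq_biprod_map_comp hT _ (by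
    rw [← Category.assoc, ← f₀_comp, Category.assoc, biprod_lift_zero_comp_map hT, comp_zero])

lemma f₁_comp_biprod_map_congr (hT : Triangle.mk f g h ∈ distTriang T) {φ ψ : P ⟶ P}
    (hφψ : (quotient _ _).map φ = (quotient _ _).map ψ) :
    f₁ φ ≫ biprod.map (𝟙 M) g = f₁ ψ ≫ biprod.map (𝟙 M) g := by
  obtain ⟨s, -, hs⟩ := (quotient_map_eq_iff φ ψ).1 hφψ
  rw [hs, Preadditive.add_comp, Category.assoc, biprod_lift_zero_comp_map hT, comp_zero, zero_add]

lemma quotient_map_eq_of_f₁_comp_biprod_map_eq (hT : Triangle.mk f g h ∈ distTriang T)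
    (hXY : ∀ φ : X⟦(1 : ℤ)⟧ ⟶ Y, φ = 0) {φ ψ : P ⟶ P}
    (hφψ : f₁ φ ≫ biprod.map (𝟙 M) g = f₁ ψ ≫ biprod.map (𝟙 M) g) :
    (quotient _ _).map φ = (quotient _ _).map ψ := by
  obtain ⟨s, hs⟩ := exists_eq_comp_biprod_lift hT (f₁ φ - f₁ ψ)
    (by rw [Preadditive.sub_comp, hφψ, sub_self])
  refine (quotient_map_eq_iff φ ψ).2 ⟨s, ?_, eq_add_of_sub_eq hs⟩
  rw [← sub_eq_iff_eq_add, ← sub_eq_zero]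
  refine eq_zero_of_comp_mor₁_eq_zero hT hXY ?_
  have h₀ : (f₀ φ - f₀ ψ - biprod.lift 0 f ≫ s) ≫ biprod.lift (0 : X ⟶ M) f = 0 := by
    rw [Preadditive.sub_comp, Preadditive.sub_comp, f₀_comp, f₀_comp, Category.assoc, ← hs,
      Preadditive.comp_sub, sub_self]
  simpa using h₀ =≫ biprod.snd

noncomputable def inducedEnd (hT : Triangle.mk f g h ∈ distTriang T)
    (x : (quotient _ _).obj P ⟶ (quotient _ _).obj P) : M ⊞ Y ⟶ M ⊞ Y :=
  (exists_f₁_comp_biprod_map_eq hT ((quotient _ _).preimage x)).choose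

lemma f₁_comp_biprod_map_eq_inducedEnd (hT : Triangle.mk f g h ∈ distTriang T) (φ : P ⟶ P) :
    f₁ φ ≫ biprod.map (𝟙 M) g = biprod.map (𝟙 M) g ≫ inducedEnd hT ((quotient _ _).map φ) :=
  (f₁_comp_biprod_map_congr hT ((quotient _ _).map_preimage _)).symm.trans
    (exists_f₁_comp_biprod_map_eq hT _).choose_spec

lemma inducedEnd_map_eq (hT : Triangle.mk f g h ∈ distTriang T)
    (hXY : ∀ φ : X⟦(1 : ℤ)⟧ ⟶ Y, φ = 0) (hXM : ∀ φ : X⟦(1 : ℤ)⟧ ⟶ M, φ = 0) {φ : P ⟶ P}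
    {β : M ⊞ Y ⟶ M ⊞ Y} (hβ : f₁ φ ≫ biprod.map (𝟙 M) g = biprod.map (𝟙 M) g ≫ β) :
    inducedEnd hT ((quotient _ _).map φ) = β :=
  eq_of_biprod_map_comp_eq hT
    (fun _ => biprod.hom_ext _ _ ((hXM _).trans zero_comp.symm) ((hXY _).trans zero_comp.symm))
    ((f₁_comp_biprod_map_eq_inducedEnd hT φ).symm.trans hβ)

lemma inducedEnd_injective (hT : Triangle.mk f g h ∈ distTriang T)
    (hXY : ∀ φ : X⟦(1 : ℤ)⟧ ⟶ Y, φ = 0) : Function.Injective (inducedEnd (M := M) hT) := by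
  intro x y hxy
  obtain ⟨φ, rfl⟩ := (quotient _ _).map_surjective x
  obtain ⟨ψ, rfl⟩ := (quotient _ _).map_surjective y
  refine quotient_map_eq_of_f₁_comp_biprod_map_eq hT hXY ?_
  rw [f₁_comp_biprod_map_eq_inducedEnd hT, f₁_comp_biprod_map_eq_inducedEnd hT, hxy]

lemma range_inducedEnd (hT : Triangle.mk f g h ∈ distTriang T)
    (hXY : ∀ φ : X⟦(1 : ℤ)⟧ ⟶ Y, φ = 0) (hXM : ∀ φ : X⟦(1 : ℤ)⟧ ⟶ M, φ = 0) :
    Set.range (inducedEnd hT) =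
      {β | ∃ α : M ⊞ M₁ ⟶ M ⊞ M₁, α ≫ biprod.map (𝟙 M) g = biprod.map (𝟙 M) g ≫ β} := by
  ext β
  constructor
  · rintro ⟨x, rfl⟩
    obtain ⟨φ, rfl⟩ := (quotient _ _).map_surjective x
    exact ⟨f₁ φ, f₁_comp_biprod_map_eq_inducedEnd hT φ⟩
  · rintro ⟨α, hα⟩
    obtain ⟨α₀, hα₀⟩ := exists_eq_comp_biprod_lift hT (biprod.lift 0 f ≫ α) (by
      rw [Category.assoc, hα, ← Category.assoc, biprod_lift_zero_comp_map hT, zero_comp])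
    exact ⟨_, inducedEnd_map_eq hT hXY hXM (φ := homMk α₀ α hα₀.symm) (by rwa [f₁_homMk])⟩

lemma inducedEnd_id (hT : Triangle.mk f g h ∈ distTriang T)
    (hXY : ∀ φ : X⟦(1 : ℤ)⟧ ⟶ Y, φ = 0) (hXM : ∀ φ : X⟦(1 : ℤ)⟧ ⟶ M, φ = 0) :
    inducedEnd hT (𝟙 ((quotient _ _).obj P)) = 𝟙 (M ⊞ Y) := by
  rw [← (quotient _ _).map_id]
  exact inducedEnd_map_eq hT hXY hXM (by rw [f₁_id, Category.id_comp, Category.comp_id])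

lemma inducedEnd_add (hT : Triangle.mk f g h ∈ distTriang T)
    (hXY : ∀ φ : X⟦(1 : ℤ)⟧ ⟶ Y, φ = 0) (hXM : ∀ φ : X⟦(1 : ℤ)⟧ ⟶ M, φ = 0)
    (x y : (quotient _ _).obj P ⟶ (quotient _ _).obj P) :
    inducedEnd hT (x + y) = inducedEnd hT x + inducedEnd hT y := by
  obtain ⟨φ, rfl⟩ := (quotient _ _).map_surjective x
  obtain ⟨ψ, rfl⟩ := (quotient _ _).map_surjective y
  rw [← Functor.map_add]
  refine inducedEnd_map_eq hT hXY hXM ?_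
  rw [f₁_add, Preadditive.add_comp, f₁_comp_biprod_map_eq_inducedEnd hT φ,
    f₁_comp_biprod_map_eq_inducedEnd hT ψ, Preadditive.comp_add]

lemma inducedEnd_comp (hT : Triangle.mk f g h ∈ distTriang T)
    (hXY : ∀ φ : X⟦(1 : ℤ)⟧ ⟶ Y, φ = 0) (hXM : ∀ φ : X⟦(1 : ℤ)⟧ ⟶ M, φ = 0)
    (x y : (quotient _ _).obj P ⟶ (quotient _ _).obj P) :
    inducedEnd hT (x ≫ y) = inducedEnd hT x ≫ inducedEnd hT y := by
  obtain ⟨φ, rfl⟩ := (quotient _ _).map_surjective x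
  obtain ⟨ψ, rfl⟩ := (quotient _ _).map_surjective y
  rw [← Functor.map_comp]
  refine inducedEnd_map_eq hT hXY hXM ?_
  rw [f₁_comp, Category.assoc, f₁_comp_biprod_map_eq_inducedEnd hT ψ,
    ← Category.assoc, f₁_comp_biprod_map_eq_inducedEnd hT φ, Category.assoc]

end Triangle

/-- Lemma 2.5 of the paper for `n = 3`, `Φ = {0}`. -/
theorem statement7 {T : Type u} [Category.{v} T] [Preadditive T] [HasZeroObject T]
    [HasShift T ℤ] [∀ n : ℤ, (shiftFunctor T n).Additive] [Pretriangulated T]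
    [HasBinaryBiproducts T]
    (M X M₁ Y : T) (f : X ⟶ M₁) (g : M₁ ⟶ Y) (h : Y ⟶ X⟦(1 : ℤ)⟧)
    (hT : Triangle.mk f g h ∈ distTriang T)
    (hXY : ∀ φ : (X⟦(1 : ℤ)⟧ : T) ⟶ Y, φ = 0)
    (hXM : ∀ φ : (X⟦(1 : ℤ)⟧ : T) ⟶ M, φ = 0)
    (B : Set (M ⊞ Y ⟶ M ⊞ Y))
    (hB : B = {ψ | (∃ t' : M₁ ⟶ M₁, g ≫ (biprod.inr ≫ ψ ≫ biprod.snd) = t' ≫ g) ∧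
        (∃ s : M ⟶ M₁, biprod.inl ≫ ψ ≫ biprod.snd = s ≫ g)})
    (P : CochainComplex T ℤ) (hP : P = twoTermComplex (biprod.lift (0 : X ⟶ M) f))
    (h1 : P.X 1 = (M ⊞ M₁)) :
    ∃ Θ : ((HomotopyCategory.quotient T (ComplexShape.up ℤ)).obj P ⟶
        (HomotopyCategory.quotient T (ComplexShape.up ℤ)).obj P) → (M ⊞ Y ⟶ M ⊞ Y),
      Function.Injective Θ ∧ Set.range Θ = B ∧
      Θ (𝟙 _) = 𝟙 (M ⊞ Y) ∧
      (∀ x y, Θ (x + y) = Θ x + Θ y) ∧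
      (∀ x y, Θ (x ≫ y) = Θ x ≫ Θ y) ∧
      (∀ φ : P ⟶ P,
        (eqToHom h1.symm ≫ φ.f 1 ≫ eqToHom h1) ≫ biprod.map (𝟙 M) g =
          biprod.map (𝟙 M) g ≫ Θ ((HomotopyCategory.quotient T (ComplexShape.up ℤ)).map φ)) := by
  subst hP hB
  refine ⟨inducedEnd hT, inducedEnd_injective hT hXY, ?_, inducedEnd_id hT hXY hXM,
    inducedEnd_add hT hXY hXM, inducedEnd_comp hT hXY hXM, fun φ => ?_⟩
  · rw [range_inducedEnd hT hXY hXM]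
    ext β
    exact exists_comp_biprod_map_eq_iff g β
  · rw [twoTermComplex.eqToHom_comp_f_one_comp_eqToHom φ h1 h1]
    exact f₁_comp_biprod_map_eq_inducedEnd hT φ
end

section
/- Let C be an additive category and W an object of C, with Γ := End_C(W) the endomorphism ring of W. Then the functor sending an object (Z, p) of the Karoubi envelope of add(W) to the Γ-module Hom((W, 1_W), (Z, p)) = {t : W ⟶ Z | t ≫ p = t} (with Γ acting by composition) is an equivalence of additive categories between the Karoubi envelope (idempotent completion) of add(W) and the category of finitely generated projective Γ-modules. -/
open CategoryTheory CategoryTheory.Limits CategoryTheory.Idempotents Opposite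

universe v u

variable {C : Type u} [Category.{v} C] [Preadditive C] [HasFiniteBiproducts C]

/-- For objects `W Z : C`, the abelian group `Hom(W, Z)` is a module over the
endomorphism ring `Γ = End W` with multiplication given by left-to-right
composition (i.e. `End (op W)`), the action beingによって precomposition:
`γ • t = γ ≫ t`. This is Mathlib's `CategoryTheory.moduleEndLeft`. -/
instance homModuleEnd (W Z : C) : Module (End (op W)) (W ⟶ Z) where
  smul γ t := γ.unop ≫ t
  one_smul t := Category.id_comp t
  mul_smul γ δ t := Category.assoc _ _ _
  smul_add γ a b := Preadditive.comp_add _ _ _ _ _ _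
  smul_zero γ := Limits.comp_zero
  add_smul γ δ t := Preadditive.add_comp _ _ _ _ _ _
  zero_smul t := Limits.zero_comp

/-- `add W`: the full subcategory of `C` whose objects are the direct summands of
finite direct sums of copies of `W`. -/
abbrev AddCat (W : C) :=
  ObjectProperty.FullSubcategory (fun Z : C =>
    ∃ (n : ℕ) (s : Z ⟶ ⨁ fun _ : Fin n => W) (r : (⨁ fun _ : Fin n => W) ⟶ Z), s ≫ r = 𝟙 Z)

/-- For an object `(Z, p)` of the Karoubi envelope of `add W`, the set
`{t : W ⟶ Z | t ≫ p = t}` is a submodule of `Hom(W, Z)` over the endomorphism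
ring `Γ = End W`, acting by composition. -/
def karoubiHomSubmodule (W : C) (P : Karoubi (AddCat W)) :
    Submodule (End (op W)) (W ⟶ P.X.obj) where
  carrier := {t | t ≫ (ObjectProperty.ι _).map P.p = t}
  add_mem' := fun {a b} ha hb => by
    simp only [Set.mem_setOf_eq] at ha hb ⊢
    rw [Preadditive.add_comp, ha, hb]
  zero_mem' := by simp
  smul_mem' := fun γ t ht => by
    simp only [Set.mem_setOf_eq] at ht ⊢
    show (γ.unop ≫ t) ≫ _ = γ.unop ≫ t
    rw [Category.assoc, ht]

/-- The functor from the Karoubi envelope (idempotent completion) of `add W` to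
`Γ`-modules, `Γ := End W`, sending `(Z, p)` to `Hom((W, 1_W), (Z, p)) =
{t : W ⟶ Z | t ≫ p = t}` with `Γ` acting by composition. -/
noncomputable def karoubiHomFunctor (W : C) :
    Karoubi (AddCat W) ⥤ ModuleCat.{v} (End (op W)) where
  obj P := ModuleCat.of _ (karoubiHomSubmodule W P)
  map {P Q} φ := ModuleCat.ofHom
    { toFun := fun t => ⟨t.1 ≫ (ObjectProperty.ι _).map φ.f, by
          have h : φ.f ≫ Q.p = φ.f := Karoubi.comp_p φ
          show (_ ≫ _) ≫ _ = _
          rw [Category.assoc, ← Functor.map_comp, h]⟩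
      map_add' := fun a b => Subtype.ext (by
        show (a.1 + b.1) ≫ _ = a.1 ≫ _ + b.1 ≫ _
        rw [Preadditive.add_comp])
      map_smul' := fun γ t => Subtype.ext (by
        show (γ.unop ≫ t.1) ≫ _ = γ.unop ≫ (t.1 ≫ _)
        rw [Category.assoc]) }
  map_id P := ModuleCat.hom_ext (LinearMap.ext (fun t => Subtype.ext (by
    show t.1 ≫ _ = t.1
    exact t.2)))
  map_comp {P Q R} φ ψ := ModuleCat.hom_ext (LinearMap.ext (fun t => Subtype.ext (by
    show t.1 ≫ _ = (t.1 ≫ _) ≫ _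
    rw [Karoubi.comp_f, Functor.map_comp, Category.assoc])))

/-! Hom(W, -) identifies maps W^n ⟶ Y with Γ-linear maps Hom(W, W^n) ⟶ Hom(W, Y), because
Hom(W, W^n) ≅ Γ^n is free on the coprojections. Passing to retracts, Hom(W, -) is fully
faithful on `add W` and on its Karoubi envelope, and sends `(Z, p)` to a direct summand of
Hom(W, Z), hence of some Γ^n. Conversely, a finitely generated projective module is the image of
an idempotent of Γ^n ≅ Hom(W, W^n), and that idempotent is postcomposition with an idempotent
endomorphism `p` of W^n; the module is then the value at `(W^n, p)`. -/

theorem Karoubi.p_hom_comp_p_hom {D : Type*} [Category D] {Q : ObjectProperty D}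
    (P : Karoubi Q.FullSubcategory) : P.p.hom ≫ P.p.hom = P.p.hom := by
  rw [← ObjectProperty.FullSubcategory.comp_hom, P.idem]

theorem Module.finite_projective_of_split {R M N : Type*} [Semiring R] [AddCommMonoid M]
    [Module R M] [AddCommMonoid N] [Module R N] [Module.Finite R M] [Module.Projective R M]
    (i : N →ₗ[R] M) (s : M →ₗ[R] N) (h : s ∘ₗ i = LinearMap.id) :
    Module.Finite R N ∧ Module.Projective R N :=
  ⟨.of_surjective s fun x => ⟨i x, LinearMap.congr_fun h x⟩, .of_split i s h⟩

section

variable (W : C)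

section

omit [HasFiniteBiproducts C]

theorem smul_eq_unop_comp {Z : C} (γ : End (op W)) (t : W ⟶ Z) : γ • t = γ.unop ≫ t := rfl

def postcompLinearMap {Y Z : C} (f : Y ⟶ Z) : (W ⟶ Y) →ₗ[End (op W)] (W ⟶ Z) where
  toFun t := t ≫ f
  map_add' _ _ := Preadditive.add_comp _ _ _ _ _ _
  map_smul' _ _ := Category.assoc _ _ _

@[simp]
theorem postcompLinearMap_apply {Y Z : C} (f : Y ⟶ Z) (t : W ⟶ Y) :
    postcompLinearMap W f t = t ≫ f := rfl

end

variable {ι : Type} [Fintype ι]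

noncomputable def homBiproductLinearEquiv :
    (W ⟶ ⨁ fun _ : ι => W) ≃ₗ[End (op W)] (ι → End (op W)) where
  toFun t i := (t ≫ biproduct.π _ i).op
  invFun c := biproduct.lift fun i => (c i).unop
  map_add' a b := by ext i; simp [Preadditive.add_comp]
  map_smul' γ t := by funext i; exact Quiver.Hom.unop_inj (Category.assoc _ _ _)
  left_inv t := biproduct.hom_ext _ _ fun i => by simp
  right_inv c := by funext i; simp

@[simp]
theorem unop_homBiproductLinearEquiv_apply (t : W ⟶ ⨁ fun _ : ι => W) (i : ι) :
    (homBiproductLinearEquiv W t i).unop = t ≫ biproduct.π _ i := rfl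

theorem comp_desc_map_ι {Z : C} (L : (W ⟶ ⨁ fun _ : ι => W) →ₗ[End (op W)] (W ⟶ Z))
    (t : W ⟶ ⨁ fun _ : ι => W) :
    t ≫ biproduct.desc (fun i => L (biproduct.ι (fun _ : ι => W) i)) = L t := by
  have ht : t = ∑ i, homBiproductLinearEquiv W t i • biproduct.ι (fun _ : ι => W) i := by
    simp only [smul_eq_unop_comp, unop_homBiproductLinearEquiv_apply]
    rw [← biproduct.lift_eq]
    exact biproduct.hom_ext _ _ fun i => by simp
  calc t ≫ biproduct.desc (fun i => L (biproduct.ι (fun _ : ι => W) i))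
      = ∑ i, homBiproductLinearEquiv W t i • L (biproduct.ι (fun _ : ι => W) i) := by
        rw [biproduct.desc_eq, Preadditive.comp_sum]
        simp only [smul_eq_unop_comp, unop_homBiproductLinearEquiv_apply, Category.assoc]
    _ = L (∑ i, homBiproductLinearEquiv W t i • biproduct.ι (fun _ : ι => W) i) := by
        simp only [map_sum, map_smul]
    _ = L t := by rw [← ht]

theorem AddCat.exists_comp_eq (Z : AddCat W) {Y : C} (L : (W ⟶ Z.obj) →ₗ[End (op W)] (W ⟶ Y)) :
    ∃ f : Z.obj ⟶ Y, ∀ t, t ≫ f = L t := by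
  obtain ⟨n, s, r, hsr⟩ := Z.property
  refine ⟨s ≫ biproduct.desc fun i => L (biproduct.ι (fun _ : Fin n => W) i ≫ r), fun t => ?_⟩
  have := comp_desc_map_ι W (L ∘ₗ postcompLinearMap W r) (t ≫ s)
  simpa [hsr] using this

theorem AddCat.hom_ext {Z : AddCat W} {Y : C} {f g : Z.obj ⟶ Y}
    (h : ∀ t : W ⟶ Z.obj, t ≫ f = t ≫ g) : f = g := by
  obtain ⟨n, s, r, hsr⟩ := Z.property
  have hr : r ≫ f = r ≫ g :=
    biproduct.hom_ext' _ _ fun i => by simpa using h (biproduct.ι (fun _ : Fin n => W) i ≫ r)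
  simpa [← Category.assoc, hsr] using congrArg (s ≫ ·) hr

theorem AddCat.exists_idem_comp_eq (Z : AddCat W) {E : Module.End (End (op W)) (W ⟶ Z.obj)}
    (hE : IsIdempotentElem E) : ∃ p : Z.obj ⟶ Z.obj, p ≫ p = p ∧ ∀ t, t ≫ p = E t := by
  obtain ⟨p, hp⟩ := AddCat.exists_comp_eq W Z E
  refine ⟨p, AddCat.hom_ext W fun t => ?_, hp⟩
  rw [← Category.assoc, hp, hp]
  exact LinearMap.congr_fun hE t

theorem AddCat.finite_projective_hom (Z : AddCat W) :
    Module.Finite (End (op W)) (W ⟶ Z.obj) ∧ Module.Projective (End (op W)) (W ⟶ Z.obj) := by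
  obtain ⟨n, s, r, hsr⟩ := Z.property
  refine Module.finite_projective_of_split
    ((homBiproductLinearEquiv W).toLinearMap ∘ₗ postcompLinearMap W s)
    (postcompLinearMap W r ∘ₗ (homBiproductLinearEquiv W).symm.toLinearMap) ?_
  ext t
  simp [hsr]

section

variable (P : Karoubi (AddCat W))

theorem mem_karoubiHomSubmodule_iff {t : W ⟶ P.X.obj} :
    t ∈ karoubiHomSubmodule W P ↔ t ≫ P.p.hom = t := Iff.rfl

def karoubiHomProjection : (W ⟶ P.X.obj) →ₗ[End (op W)] karoubiHomSubmodule W P :=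
  (postcompLinearMap W P.p.hom).codRestrict _ fun t => by
    rw [mem_karoubiHomSubmodule_iff, postcompLinearMap_apply, Category.assoc,
      Karoubi.p_hom_comp_p_hom]

@[simp]
theorem karoubiHomProjection_apply_coe (t : W ⟶ P.X.obj) :
    (karoubiHomProjection W P t : W ⟶ P.X.obj) = t ≫ P.p.hom := rfl

theorem karoubiHomProjection_coe (t : karoubiHomSubmodule W P) :
    karoubiHomProjection W P t = t :=
  Subtype.ext t.2

@[simp]
theorem karoubiHomFunctor_map_apply_coe {Q : Karoubi (AddCat W)} (φ : P ⟶ Q)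
    (t : karoubiHomSubmodule W P) :
    (((karoubiHomFunctor W).map φ).hom t).1 = t.1 ≫ φ.f.hom := rfl

theorem karoubiHomSubmodule_finite_projective :
    Module.Finite (End (op W)) (karoubiHomSubmodule W P) ∧
      Module.Projective (End (op W)) (karoubiHomSubmodule W P) :=
  have := (AddCat.finite_projective_hom W P.X).1
  have := (AddCat.finite_projective_hom W P.X).2
  Module.finite_projective_of_split (karoubiHomSubmodule W P).subtype (karoubiHomProjection W P)
    (LinearMap.ext (karoubiHomProjection_coe W P))

end

instance : (karoubiHomFunctor W).Additive where
  map_add {P Q φ ψ} := by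
    ext t : 2
    exact Subtype.ext (Preadditive.comp_add _ _ _ _ _ _)

instance : (karoubiHomFunctor W).Faithful where
  map_injective {P Q φ ψ} h := by
    have hcomp : ∀ t : W ⟶ P.X.obj, t ≫ P.p.hom ≫ φ.f.hom = t ≫ P.p.hom ≫ ψ.f.hom := fun t => by
      simpa using congrArg (fun g => (g.hom (karoubiHomProjection W P t)).1) h
    have hp : P.p.hom ≫ φ.f.hom = P.p.hom ≫ ψ.f.hom := AddCat.hom_ext W hcomp
    ext
    simpa [← ObjectProperty.FullSubcategory.comp_hom] using hp

instance : (karoubiHomFunctor W).Full where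
  map_surjective {P Q} g := by
    obtain ⟨f, hf⟩ := AddCat.exists_comp_eq W P.X
      ((karoubiHomSubmodule W Q).subtype ∘ₗ g.hom ∘ₗ karoubiHomProjection W P)
    -- sandwiching `f` between the idempotents makes it a morphism of the Karoubi envelope
    refine ⟨⟨ObjectProperty.homMk (P.p.hom ≫ f ≫ Q.p.hom), ?_⟩, ?_⟩
    · ext
      simp only [ObjectProperty.FullSubcategory.comp_hom, ObjectProperty.homMk_hom, Category.assoc,
        Karoubi.p_hom_comp_p_hom]
      rw [← Category.assoc, Karoubi.p_hom_comp_p_hom]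
    · ext t : 2
      apply Subtype.ext
      have ht : t.1 ≫ P.p.hom = t.1 := t.2
      calc t.1 ≫ P.p.hom ≫ f ≫ Q.p.hom = (t.1 ≫ f) ≫ Q.p.hom := by
            rw [← Category.assoc, ht, Category.assoc]
        _ = (g.hom (karoubiHomProjection W P t.1)).1 ≫ Q.p.hom := by rw [hf]; rfl
        _ = (g.hom t).1 ≫ Q.p.hom :=
            congrArg (fun x => (g.hom x).1 ≫ Q.p.hom) (karoubiHomProjection_coe W P t)
        _ = (g.hom t).1 := (g.hom t).2

theorem exists_karoubiHomFunctor_obj_iso (N : ModuleCat.{v} (End (op W)))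
    [Module.Finite (End (op W)) N] [Module.Projective (End (op W)) N] :
    ∃ P : Karoubi (AddCat W), Nonempty ((karoubiHomFunctor W).obj P ≅ N) := by
  obtain ⟨n, q, hq⟩ := Module.Finite.exists_fin' (End (op W)) N
  obtain ⟨j, hqj⟩ := Module.projective_lifting_property q LinearMap.id hq
  let e := homBiproductLinearEquiv W (ι := Fin n)
  let j' := e.symm.toLinearMap ∘ₗ j
  let q' := q ∘ₗ e.toLinearMap
  have hq'j' : ∀ x, q' (j' x) = x := fun x => by simpa [j', q'] using LinearMap.congr_fun hqj x
  let Z : AddCat W := ⟨⨁ fun _ : Fin n => W, n, 𝟙 _, 𝟙 _, Category.id_comp _⟩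
  obtain ⟨p, hpp, hp⟩ := AddCat.exists_idem_comp_eq W Z (E := j' ∘ₗ q') <| by
    ext1 t
    simp only [Module.End.mul_apply, LinearMap.comp_apply, hq'j']
  let P : Karoubi (AddCat W) := ⟨Z, ObjectProperty.homMk p, ObjectProperty.hom_ext _ hpp⟩
  have hrange : karoubiHomSubmodule W P = LinearMap.range j' := by
    ext t
    change t ≫ p = t ↔ _
    rw [hp, LinearMap.mem_range]
    refine ⟨fun h => ⟨q' t, h⟩, ?_⟩
    rintro ⟨x, rfl⟩
    simp only [LinearMap.comp_apply, hq'j']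
  exact ⟨P, ⟨(LinearEquiv.ofEq _ _ hrange ≪≫ₗ
    (LinearEquiv.ofLeftInverse (g := q') hq'j').symm).toModuleIso⟩⟩

end

/-- Lemma 2.4 of the paper. Let `C` be an additive category,
`W` an object of `C`, and `Γ := End W` (multiplication being left-to-right
composition, i.e. `End (op W)`). The functor sending an object `(Z, p)` of the
Karoubi envelope of `add W` to the `Γ`-module `{t : W ⟶ Z | t ≫ p = t}` is an
equivalence of additive categories from the Karoubi envelope of `add W` onto
the category of finitely generated projective `Γ`-modules: it is additive,
fully faithful, takes values in finitely generated projective modules, and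
every finitely generated projective `Γ`-module is isomorphic to a value of it. -/
theorem statement10 (W : C) :
    (karoubiHomFunctor W).Additive ∧
      (karoubiHomFunctor W).Full ∧ (karoubiHomFunctor W).Faithful ∧
      (∀ P : Karoubi (AddCat W),
        Module.Finite (End (op W)) ((karoubiHomFunctor W).obj P) ∧
          Module.Projective (End (op W)) ((karoubiHomFunctor W).obj P)) ∧
      (∀ N : ModuleCat.{v} (End (op W)), Module.Finite (End (op W)) N →
        Module.Projective (End (op W)) N →
          ∃ P : Karoubi (AddCat W), Nonempty ((karoubiHomFunctor W).obj P ≅ N)) :=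
  ⟨inferInstance, inferInstance, inferInstance, karoubiHomSubmodule_finite_projective W,
    fun N _ _ => exists_karoubiHomFunctor_obj_iso W N⟩
end
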